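/- Let ρ, u, T : ℝ → ℝ be differentiable at a point x with ρ(x) > 0 and T(x) > 0, and let M(x,v) = (ρ(x)/√(2πT(x))) exp(−(v−u(x))²/(2T(x))). Then the complementary projection of the Maxwellian transport term admits the closed form: for all v ∈ ℝ, v ∂ₓM(x,v) − Π_{M(x,·)}[v ∂ₓM(x,·)](v) = ((v−u(x))³/(2T(x)) − (3/2)(v−u(x))) · (T′(x)/T(x)) · M(x,v). -/

import Mathlib

/-!
Differentiating `log M` in `x` shows `∂ₓM = (α + β y + γ y²) M` with `y = v - u` and
`γ = T' / (2 T²)`, so the transport term `v ∂ₓM` is a cubic polynomial in `y` times `M`.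
The Gaussian moments `∫ y^(2k) M = (2k - 1)!! Tᵏ ρ` (odd moments vanish) show that `Π_M`
fixes `M`, `y M`, `y² M` and maps `y³ M` to `3 T y M`; hence only the cubic coefficient
survives in the complementary projection, leaving `γ (y³ - 3 T y) M`.
-/

open MeasureTheory Real

/-- The 1D Maxwellian with density `ρ`, bulk velocity `u`, and temperature `T`. -/
noncomputable def maxwellian (ρ u T : ℝ) (v : ℝ) : ℝ :=
  ρ / Real.sqrt (2 * Real.pi * T) * Real.exp (-(v - u) ^ 2 / (2 * T))

/-- The 1D micro-macro projection operator `Π_M` associated with the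
Maxwellian `M[ρ,u,T]`. -/
noncomputable def projMax (ρ u T : ℝ) (F : ℝ → ℝ) (v : ℝ) : ℝ :=
  ((1 / ρ) * (∫ w : ℝ, F w)
    + ((v - u) / Real.sqrt T) *
        ((1 / ρ) * ∫ w : ℝ, ((w - u) / Real.sqrt T) * F w)
    + Real.sqrt 2 * ((v - u) ^ 2 / (2 * T) - 1 / 2) *
        ((1 / ρ) * ∫ w : ℝ, Real.sqrt 2 * ((w - u) ^ 2 / (2 * T) - 1 / 2) * F w))
  * maxwellian ρ u T v

open Filter Topology

section GaussianMoments

variable {b : ℝ}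

theorem integrable_pow_mul_exp_neg_mul_sq (hb : 0 < b) (n : ℕ) :
    Integrable fun x : ℝ ↦ x ^ n * exp (-b * x ^ 2) := by
  simpa using integrable_rpow_mul_exp_neg_mul_sq hb (s := n) (by linarith [n.cast_nonneg (α := ℝ)])

theorem tendsto_pow_mul_exp_neg_mul_sq_cocompact (hb : 0 < b) (n : ℕ) :
    Tendsto (fun x : ℝ ↦ x ^ n * exp (-b * x ^ 2)) (cocompact ℝ) (𝓝 0) := by
  rw [tendsto_zero_iff_norm_tendsto_zero]
  simpa [abs_exp] using tendsto_rpow_abs_mul_exp_neg_mul_sq_cocompact hb n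

theorem integral_pow_add_two_mul_exp_neg_mul_sq (hb : 0 < b) (n : ℕ) :
    ∫ x, x ^ (n + 2) * exp (-b * x ^ 2) = (n + 1) / (2 * b) * ∫ x, x ^ n * exp (-b * x ^ 2) := by
  have hderiv (x : ℝ) : HasDerivAt (fun x ↦ x ^ (n + 1) * exp (-b * x ^ 2))
      ((n + 1) * (x ^ n * exp (-b * x ^ 2)) - 2 * b * (x ^ (n + 2) * exp (-b * x ^ 2))) x := by
    refine ((hasDerivAt_pow (n + 1) x).fun_mul
      ((hasDerivAt_pow 2 x).const_mul (-b)).exp).congr_deriv ?_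
    push_cast
    ring
  have hlim := tendsto_pow_mul_exp_neg_mul_sq_cocompact hb (n + 1)
  have hparts := integral_of_hasDerivAt_of_tendsto hderiv
    (((integrable_pow_mul_exp_neg_mul_sq hb n).const_mul _).sub
      ((integrable_pow_mul_exp_neg_mul_sq hb (n + 2)).const_mul _))
    (hlim.mono_left atBot_le_cocompact) (hlim.mono_left atTop_le_cocompact)
  rw [integral_sub ((integrable_pow_mul_exp_neg_mul_sq hb n).const_mul _)
    ((integrable_pow_mul_exp_neg_mul_sq hb (n + 2)).const_mul _), integral_const_mul,
    integral_const_mul, sub_zero, sub_eq_zero] at hparts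
  rw [div_mul_eq_mul_div, eq_div_iff (by positivity)]
  linarith

theorem integral_pow_odd_mul_exp_neg_mul_sq (k : ℕ) :
    ∫ x, x ^ (2 * k + 1) * exp (-b * x ^ 2) = 0 := by
  have hodd := integral_neg_eq_self (fun x : ℝ ↦ x ^ (2 * k + 1) * exp (-b * x ^ 2)) volume
  simp only [Odd.neg_pow (odd_two_mul_add_one k), neg_sq, neg_mul, integral_neg,
    neg_eq_self] at hodd
  simpa only [neg_mul] using hodd

theorem integral_quintic_mul_exp_neg_mul_sq (hb : 0 < b) (c : Fin 6 → ℝ) :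
    ∫ x, (∑ k, c k * x ^ (k : ℕ)) * exp (-b * x ^ 2)
      = (c 0 + c 2 / (2 * b) + 3 * c 4 / (2 * b) ^ 2) * √(π / b) := by
  have hint (k : Fin 6) := (integrable_pow_mul_exp_neg_mul_sq hb k).const_mul (c k)
  simp_rw [Finset.sum_mul, mul_assoc]
  rw [integral_finsetSum _ fun k _ ↦ hint k]
  have m₀ : ∫ x : ℝ, exp (-(b * x ^ 2)) = √(π / b) := by
    simpa only [neg_mul] using integral_gaussian b
  have m₁ := integral_pow_odd_mul_exp_neg_mul_sq (b := b) 0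
  have m₂ := integral_pow_add_two_mul_exp_neg_mul_sq hb 0
  have m₃ := integral_pow_odd_mul_exp_neg_mul_sq (b := b) 1
  have m₄ := integral_pow_add_two_mul_exp_neg_mul_sq hb 2
  have m₅ := integral_pow_odd_mul_exp_neg_mul_sq (b := b) 2
  simp only [Fin.sum_univ_six, integral_const_mul]
  norm_num at m₁ m₂ m₃ m₄ m₅ ⊢
  rw [m₁, m₂, m₃, m₄, m₅, m₂, m₀]
  field_simp
  ring

end GaussianMoments

theorem hasDerivAt_maxwellian {ρ u T : ℝ → ℝ} {ρ' u' T' x : ℝ} (hρ : HasDerivAt ρ ρ' x)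
    (hu : HasDerivAt u u' x) (hT : HasDerivAt T T' x) (hρ₀ : ρ x ≠ 0) (hT₀ : 0 < T x) (v : ℝ) :
    HasDerivAt (fun s ↦ maxwellian (ρ s) (u s) (T s) v)
      ((ρ' / ρ x - T' / (2 * T x) + u' / T x * (v - u x) + T' / (2 * T x ^ 2) * (v - u x) ^ 2)
        * maxwellian (ρ x) (u x) (T x) v) x := by
  have hpos : 0 < 2 * π * T x := by positivity
  have hS : 0 < √(2 * π * T x) := sqrt_pos.mpr hpos
  have h := (hρ.div ((hT.const_mul (2 * π)).sqrt hpos.ne') hS.ne').mul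
    ((((hu.const_sub v).pow 2).neg.div (hT.const_mul 2) (by positivity)).exp)
  refine h.congr_deriv ?_
  have hS2 : √(2 * π * T x) ^ 2 = 2 * π * T x := sq_sqrt hpos.le
  simp only [maxwellian, Pi.div_apply, Pi.pow_apply, Pi.neg_apply]
  field_simp
  rw [hS2]
  push_cast
  ring

section Maxwellian

variable {ρ u T : ℝ}

theorem maxwellian_eq_mul_exp (ρ u T v : ℝ) :
    maxwellian ρ u T v = ρ / √(2 * π * T) * exp (-(2 * T)⁻¹ * (v - u) ^ 2) := by
  rw [maxwellian]
  congr 2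
  ring

theorem integral_quintic_mul_maxwellian (hT : 0 < T) (c : Fin 6 → ℝ) :
    ∫ w, (∑ k, c k * (w - u) ^ (k : ℕ)) * maxwellian ρ u T w
      = ρ * (c 0 + c 2 * T + 3 * c 4 * T ^ 2) := by
  have hb : 0 < (2 * T)⁻¹ := by positivity
  simp_rw [maxwellian_eq_mul_exp, mul_left_comm _ (ρ / _)]
  rw [integral_const_mul, integral_sub_right_eq_self
    (fun y ↦ (∑ k, c k * y ^ (k : ℕ)) * exp (-(2 * T)⁻¹ * y ^ 2)),
    integral_quintic_mul_exp_neg_mul_sq hb, div_inv_eq_mul, mul_comm π]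
  field_simp

theorem integral_quadratic_mul_cubic_mul_maxwellian (hT : 0 < T) (a₀ a₁ a₂ p₀ p₁ p₂ p₃ : ℝ) :
    ∫ w, (a₀ + a₁ * (w - u) + a₂ * (w - u) ^ 2) *
        ((p₀ + p₁ * (w - u) + p₂ * (w - u) ^ 2 + p₃ * (w - u) ^ 3) * maxwellian ρ u T w)
      = ρ * (a₀ * p₀ + (a₀ * p₂ + a₁ * p₁ + a₂ * p₀) * T + 3 * (a₁ * p₃ + a₂ * p₂) * T ^ 2) := by
  have h := integral_quintic_mul_maxwellian (ρ := ρ) (u := u) hT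
    ![a₀ * p₀, a₀ * p₁ + a₁ * p₀, a₀ * p₂ + a₁ * p₁ + a₂ * p₀, a₀ * p₃ + a₁ * p₂ + a₂ * p₁,
      a₁ * p₃ + a₂ * p₂, a₂ * p₃]
  simp only [Fin.sum_univ_six, Matrix.cons_val] at h
  norm_num at h
  rw [← h]
  congr 1 with w
  ring

theorem projMax_cubic_mul_maxwellian (hρ : ρ ≠ 0) (hT : 0 < T) (p₀ p₁ p₂ p₃ v : ℝ) :
    projMax ρ u T (fun w ↦
        (p₀ + p₁ * (w - u) + p₂ * (w - u) ^ 2 + p₃ * (w - u) ^ 3) * maxwellian ρ u T w) v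
      = (p₀ + (p₁ + 3 * T * p₃) * (v - u) + p₂ * (v - u) ^ 2) * maxwellian ρ u T v := by
  set F := fun w ↦ (p₀ + p₁ * (w - u) + p₂ * (w - u) ^ 2 + p₃ * (w - u) ^ 3) * maxwellian ρ u T w
  have hI := integral_quadratic_mul_cubic_mul_maxwellian (ρ := ρ) (u := u) hT (p₀ := p₀)
    (p₁ := p₁) (p₂ := p₂) (p₃ := p₃)
  have h₁ : ∫ w, F w = ρ * (p₀ + p₂ * T) := by simpa using hI 1 0 0
  have h₂ : ∫ w, (w - u) / √T * F w = ρ * (p₁ * T + 3 * p₃ * T ^ 2) / √T := by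
    rw [show (fun w ↦ (w - u) / √T * F w)
      = fun w ↦ (0 + (√T)⁻¹ * (w - u) + 0 * (w - u) ^ 2) * F w by ext; ring, hI]
    ring
  have h₃ : ∫ w, √2 * ((w - u) ^ 2 / (2 * T) - 1 / 2) * F w = √2 * ρ * p₂ * T := by
    rw [show (fun w ↦ √2 * ((w - u) ^ 2 / (2 * T) - 1 / 2) * F w)
      = fun w ↦ (-(√2 / 2) + 0 * (w - u) + √2 / (2 * T) * (w - u) ^ 2) * F w by ext; ring, hI]
    field_simp
    ring
  have hT' : √T ^ 2 = T := sq_sqrt hT.le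
  have h2 : √2 ^ 2 = 2 := sq_sqrt zero_le_two
  rw [projMax, h₁, h₂, h₃]
  field_simp
  rw [hT', h2]
  ring

theorem sub_projMax_cubic_mul_maxwellian (hρ : ρ ≠ 0) (hT : 0 < T) (p₀ p₁ p₂ p₃ v : ℝ) :
    (p₀ + p₁ * (v - u) + p₂ * (v - u) ^ 2 + p₃ * (v - u) ^ 3) * maxwellian ρ u T v
      - projMax ρ u T (fun w ↦
          (p₀ + p₁ * (w - u) + p₂ * (w - u) ^ 2 + p₃ * (w - u) ^ 3) * maxwellian ρ u T w) v
      = p₃ * ((v - u) ^ 3 - 3 * T * (v - u)) * maxwellian ρ u T v := by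
  rw [projMax_cubic_mul_maxwellian hρ hT]
  ring

end Maxwellian

theorem complementary_projection_of_maxwellian_transport
    (ρ u T : ℝ → ℝ) (x : ℝ)
    (hρd : DifferentiableAt ℝ ρ x) (hud : DifferentiableAt ℝ u x)
    (hTd : DifferentiableAt ℝ T x)
    (hρ : 0 < ρ x) (hT : 0 < T x) :
    ∀ v : ℝ,
      v * deriv (fun s : ℝ => maxwellian (ρ s) (u s) (T s) v) x
        - projMax (ρ x) (u x) (T x)
            (fun w : ℝ => w * deriv (fun s : ℝ => maxwellian (ρ s) (u s) (T s) w) x) v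
      = ((v - u x) ^ 3 / (2 * T x) - (3 / 2) * (v - u x)) * (deriv T x / T x)
          * maxwellian (ρ x) (u x) (T x) v := by
  intro v
  have htransport (w : ℝ) : w * deriv (fun s ↦ maxwellian (ρ s) (u s) (T s) w) x
      = (u x * (deriv ρ x / ρ x - deriv T x / (2 * T x))
          + (deriv ρ x / ρ x - deriv T x / (2 * T x) + u x * (deriv u x / T x)) * (w - u x)
          + (deriv u x / T x + u x * (deriv T x / (2 * T x ^ 2))) * (w - u x) ^ 2
          + deriv T x / (2 * T x ^ 2) * (w - u x) ^ 3) * maxwellian (ρ x) (u x) (T x) w := by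
    rw [(hasDerivAt_maxwellian hρd.hasDerivAt hud.hasDerivAt hTd.hasDerivAt hρ.ne' hT w).deriv]
    ring
  simp only [htransport]
  rw [sub_projMax_cubic_mul_maxwellian hρ.ne' hT]
  field_simp
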